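/- Hochschild cohomology of odd Moore algebras (Proposition 4.2, concretized): Let R be a commutative ring in which 2 is invertible, let k ≥ 1, and let w = ∑_{i≥k} w_i t^{2i} ∈ R[[t]] be an even power series whose first (possibly) nonzero coefficient w_k is not a zero divisor in R; assume R has no k-torsion (k·r = 0 implies r = 0). Write w'(t) = ∑_{i≥k} 2i·w_i t^{2i−1} for the formal derivative. On the R-module C of pairs (A,B) of power series in R[[t]] with zero constant coefficient, define the R-linear map d(A,B) := (B₁·w', 2t·A₁), where A₁ and B₁ denote the odd parts of A and B. Then d∘d = 0, and there is an isomorphism of R-modules (ker d)/(im d) ≅ R[[t]]/(w̃'), where w̃ := ∑_{i≥k} w_i t^i, w̃' = ∑_{i≥k} i·w_i t^{i−1} is its formal derivative, and (w̃') is the ideal it generates. (The complex (C,d) computes the Hochschild cohomology of the odd Moore algebra with A_∞-structure m₀ + w(t)∂_τ, so this proves HH*(A) ≅ R[[t]]/(w̃').) -/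

import Mathlib

open PowerSeries

set_option synthInstance.maxHeartbeats 1000000
set_option maxHeartbeats 1000000

variable {R : Type*} [CommRing R]

/-- The odd part of a power series, as an `R`-linear map. -/
noncomputable def oddPartL (R : Type*) [CommRing R] : R⟦X⟧ →ₗ[R] R⟦X⟧ where
  toFun f := PowerSeries.mk fun n => if Odd n then coeff n f else 0
  map_add' f g := by
    ext n
    simp only [coeff_mk, map_add]
    split_ifs <;> simp
  map_smul' c f := by
    ext n
    simp only [coeff_mk, map_smul, RingHom.id_apply, smul_eq_mul]
    split_ifs <;> simp

/-- The module `C` of pairs `(A,B)` of power series with zero constant coefficient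
(normalised derivations `A(t)∂_τ + B(t)∂_t`). -/
def NormPairs (R : Type*) [CommRing R] : Submodule R (R⟦X⟧ × R⟦X⟧) where
  carrier := {p | constantCoeff p.1 = 0 ∧ constantCoeff p.2 = 0}
  add_mem' := by
    rintro ⟨a₁, a₂⟩ ⟨b₁, b₂⟩ ⟨ha₁, ha₂⟩ ⟨hb₁, hb₂⟩
    simp_all
  zero_mem' := by simp
  smul_mem' := by
    rintro c ⟨a₁, a₂⟩ ⟨ha₁, ha₂⟩
    simp_all

/-- The Hochschild differential `d(A,B) = (B₁·w', 2t·A₁)` on the full module of pairs. -/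
noncomputable def dFull (R : Type*) [CommRing R] (w : R⟦X⟧) :
    (R⟦X⟧ × R⟦X⟧) →ₗ[R] (R⟦X⟧ × R⟦X⟧) :=
  LinearMap.prod
    (((LinearMap.mulLeft R w.derivativeFun).comp (oddPartL R)).comp (LinearMap.snd R R⟦X⟧ R⟦X⟧))
    (((LinearMap.mulLeft R (2 * PowerSeries.X)).comp (oddPartL R)).comp
      (LinearMap.fst R R⟦X⟧ R⟦X⟧))

theorem dFull_mem (R : Type*) [CommRing R] (w : R⟦X⟧) (p : R⟦X⟧ × R⟦X⟧)
    (hp : p ∈ NormPairs R) : dFull R w p ∈ NormPairs R := by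
  obtain ⟨A, B⟩ := p
  refine And.intro ?_ ?_ <;>
  · show constantCoeff _ = 0
    simp only [dFull, oddPartL, LinearMap.prod_apply, LinearMap.comp_apply, LinearMap.coe_mk,
      AddHom.coe_mk, LinearMap.mulLeft_apply, LinearMap.snd_apply, LinearMap.fst_apply,
      Pi.prod, map_mul]
    have h0 : ∀ f : R⟦X⟧,
        constantCoeff (PowerSeries.mk fun n => if Odd n then coeff n f else 0) = 0 := by
      intro f
      rw [← coeff_zero_eq_constantCoeff_apply, coeff_mk]
      simp [Nat.odd_iff]
    simp [h0]

/-- The Hochschild differential restricted to the complex `C` of normalised derivations. -/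
noncomputable def dC (R : Type*) [CommRing R] (w : R⟦X⟧) : NormPairs R →ₗ[R] NormPairs R :=
  (dFull R w).restrict (fun p hp => dFull_mem R w p hp)

/-
Split every series as `f = f₀(t²) + t·f₁(t²)` with `f₀ = evenCoeffs f`, `f₁ = oddCoeffs f`.
The hypothesis on `w` says `w = w̃(t²)`, so `w' = 2t·w̃'(t²)` and
`d(A, B) = ((t·2w̃'·B₁)(t²), (t·2A₁)(t²))` with `A₁ = oddCoeffs A`, `B₁ = oddCoeffs B`:
both components are even, which gives `d ∘ d = 0`. The lowest coefficient `2k·w_k` of `w'` is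
regular, so `w'` and `2t` are non-zero-divisors and the cocycles are the pairs of even series.
A cocycle `(A, B)` has `A = (t·h)(t²)`; sending it to the class of `h` is onto, and `(A, B)` is a
coboundary iff `h ∈ 2w̃'·R⟦t⟧ = (w̃')`: as `2` is a unit, the component `B` is always reached.
-/

open scoped nonZeroDivisors

local notation "expand₂" => PowerSeries.expand 2 two_ne_zero

namespace PowerSeries

theorem mem_nonZeroDivisors_of_coeff {φ : R⟦X⟧} {n : ℕ} (hlow : ∀ m < n, coeff m φ = 0)
    (hn : coeff n φ ∈ R⁰) : φ ∈ R⟦X⟧⁰ := by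
  obtain ⟨ψ, rfl⟩ := X_pow_dvd_iff.mpr hlow
  have hψ : ψ ∈ R⟦X⟧⁰ := MvPowerSeries.mem_nonZeroDivisors_of_constantCoeff <| by
    rwa [coeff_X_pow_mul', if_pos le_rfl, Nat.sub_self, coeff_zero_eq_constantCoeff_apply] at hn
  refine mem_nonZeroDivisors_iff_left.mpr fun g hg => ?_
  rw [mul_assoc, ← mul_zero (X ^ n)] at hg
  exact (mul_left_mem_nonZeroDivisors_eq_zero_iff hψ).mp (X_pow_mul_cancel hg)

theorem derivative_expand (p : ℕ) (hp : p ≠ 0) (f : R⟦X⟧) :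
    d⁄dX R (expand p hp f) = (p : R⟦X⟧) * X ^ (p - 1) * expand p hp (d⁄dX R f) := by
  rw [expand_apply, expand_apply, derivative_subst (HasSubst.X_pow hp), derivative_pow,
    derivative_X]
  ring

theorem derivative_mem_nonZeroDivisors {f : R⟦X⟧} {n : ℕ} (hn : 0 < n)
    (hlow : ∀ m, 0 < m → m < n → coeff m f = 0) (hlead : coeff n f * n ∈ R⁰) :
    d⁄dX R f ∈ R⟦X⟧⁰ := by
  obtain ⟨n, rfl⟩ := Nat.exists_eq_add_of_lt hn
  refine mem_nonZeroDivisors_of_coeff (n := n) (fun m hm => ?_) ?_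
  · rw [coeff_derivative, hlow (m + 1) (by omega) (by omega), zero_mul]
  · simpa [coeff_derivative] using hlead

noncomputable def evenCoeffs (f : R⟦X⟧) : R⟦X⟧ := mk fun n => coeff (2 * n) f

noncomputable def oddCoeffs (f : R⟦X⟧) : R⟦X⟧ := mk fun n => coeff (2 * n + 1) f

theorem expand_evenCoeffs_add_X_mul_expand_oddCoeffs (f : R⟦X⟧) :
    expand₂ (evenCoeffs f) + X * expand₂ (oddCoeffs f) = f := by
  ext n
  rcases n with _ | n
  · simp [evenCoeffs]
  rw [map_add, coeff_succ_X_mul]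
  obtain ⟨m, rfl | rfl⟩ := Nat.even_or_odd' n
  · rw [coeff_expand_of_not_dvd _ _ _ (by omega), coeff_expand_mul, zero_add, oddCoeffs, coeff_mk]
  · rw [show 2 * m + 1 + 1 = 2 * (m + 1) by ring, coeff_expand_mul,
      coeff_expand_of_not_dvd _ _ _ (by omega), add_zero, evenCoeffs, coeff_mk]

theorem oddCoeffs_expand (f : R⟦X⟧) : oddCoeffs (expand₂ f) = 0 := by
  ext n
  rw [oddCoeffs, coeff_mk, coeff_expand_of_not_dvd _ _ _ (by omega), map_zero]

theorem oddCoeffs_X_mul_expand (f : R⟦X⟧) : oddCoeffs (X * expand₂ f) = f := by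
  ext n
  rw [oddCoeffs, coeff_mk, coeff_succ_X_mul, coeff_expand_mul]

theorem expand_evenCoeffs_of_oddCoeffs_eq_zero {f : R⟦X⟧} (hf : oddCoeffs f = 0) :
    expand₂ (evenCoeffs f) = f := by
  simpa [hf] using expand_evenCoeffs_add_X_mul_expand_oddCoeffs f

noncomputable def shiftedEvenCoeffs : R⟦X⟧ →ₗ[R] R⟦X⟧ where
  toFun f := mk fun n => coeff (2 * n + 2) f
  map_add' f g := by ext; simp
  map_smul' c f := by ext; simp

theorem shiftedEvenCoeffs_expand_X_mul (f : R⟦X⟧) : shiftedEvenCoeffs (expand₂ (X * f)) = f := by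
  ext n
  simp [shiftedEvenCoeffs]

theorem expand_X_mul_shiftedEvenCoeffs {f : R⟦X⟧} (hf : oddCoeffs f = 0)
    (h0 : constantCoeff f = 0) : expand₂ (X * shiftedEvenCoeffs f) = f := by
  conv_rhs => rw [← expand_evenCoeffs_of_oddCoeffs_eq_zero hf]
  congr 1
  ext n
  rcases n with _ | n
  · simpa [evenCoeffs] using h0.symm
  · simp [evenCoeffs, shiftedEvenCoeffs, coeff_succ_X_mul, mul_add]

end PowerSeries

namespace OddMoore

theorem oddPartL_eq_X_mul_expand_oddCoeffs (f : R⟦X⟧) :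
    oddPartL R f = X * expand₂ (oddCoeffs f) := by
  ext n
  rcases n with _ | n
  · simp [oddPartL]
  · simp only [oddPartL, LinearMap.coe_mk, AddHom.coe_mk, coeff_mk, coeff_succ_X_mul,
      coeff_expand, Nat.odd_add_one, Nat.not_odd_iff_even, even_iff_two_dvd, oddCoeffs]
    split_ifs with h
    · rw [Nat.mul_div_cancel' h]
    · rfl

theorem oddPartL_eq_zero_iff {f : R⟦X⟧} : oddPartL R f = 0 ↔ oddCoeffs f = 0 := by
  rw [oddPartL_eq_X_mul_expand_oddCoeffs]
  refine ⟨fun h => ?_, fun h => by rw [h, map_zero, mul_zero]⟩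
  rw [← oddCoeffs_X_mul_expand (oddCoeffs f), h]
  ext
  simp [oddCoeffs]

theorem oddPartL_expand (f : R⟦X⟧) : oddPartL R (expand₂ f) = 0 :=
  oddPartL_eq_zero_iff.mpr (oddCoeffs_expand f)

variable {w : R⟦X⟧}

theorem dFull_apply (w : R⟦X⟧) (p : R⟦X⟧ × R⟦X⟧) :
    dFull R w p = (d⁄dX R w * oddPartL R p.2, 2 * X * oddPartL R p.1) := rfl

theorem dFull_eq_expand (hw : oddCoeffs w = 0) (p : R⟦X⟧ × R⟦X⟧) :
    dFull R w p = (expand₂ (X * (2 * d⁄dX R (evenCoeffs w) * oddCoeffs p.2)),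
      expand₂ (X * (2 * oddCoeffs p.1))) := by
  have hderiv : d⁄dX R w = 2 * X * expand₂ (d⁄dX R (evenCoeffs w)) := by
    conv_lhs => rw [← expand_evenCoeffs_of_oddCoeffs_eq_zero hw]
    rw [derivative_expand]
    norm_num
  rw [dFull_apply, hderiv, oddPartL_eq_X_mul_expand_oddCoeffs, oddPartL_eq_X_mul_expand_oddCoeffs]
  simp only [map_mul, expand_X, map_ofNat, Prod.mk.injEq]
  constructor <;> ring

theorem dC_comp_dC (hw : oddCoeffs w = 0) : (dC R w).comp (dC R w) = 0 := by
  ext p : 2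
  change dFull R w (dFull R w p) = 0
  rw [dFull_eq_expand hw (dFull R w p), dFull_eq_expand hw p]
  simp only [oddCoeffs_expand, mul_zero, map_zero, Prod.mk_zero_zero]

theorem dFull_eq_zero_iff (hw' : d⁄dX R w ∈ R⟦X⟧⁰) (h2 : IsUnit (2 : R)) {p : R⟦X⟧ × R⟦X⟧} :
    dFull R w p = 0 ↔ oddCoeffs p.1 = 0 ∧ oddCoeffs p.2 = 0 := by
  have h2X : (2 * X : R⟦X⟧) ∈ R⟦X⟧⁰ := mem_nonZeroDivisors_of_coeff (n := 1) (by simp)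
    (by simpa [← map_ofNat C 2] using h2.mem_nonZeroDivisors)
  rw [dFull_apply, Prod.mk_eq_zero, mul_left_mem_nonZeroDivisors_eq_zero_iff hw',
    mul_left_mem_nonZeroDivisors_eq_zero_iff h2X, oddPartL_eq_zero_iff, oddPartL_eq_zero_iff,
    and_comm]

theorem exists_dFull_eq_iff (hw : oddCoeffs w = 0) (h2 : IsUnit (2 : R)) {A B : R⟦X⟧}
    (hA : oddCoeffs A = 0) (hA0 : constantCoeff A = 0) (hB : oddCoeffs B = 0)
    (hB0 : constantCoeff B = 0) :
    (∃ p ∈ NormPairs R, dFull R w p = (A, B)) ↔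
      d⁄dX R (evenCoeffs w) ∣ shiftedEvenCoeffs A := by
  constructor
  · rintro ⟨p, -, hp⟩
    rw [dFull_eq_expand hw, Prod.mk.injEq] at hp
    rw [← hp.1, shiftedEvenCoeffs_expand_X_mul]
    exact ⟨2 * oddCoeffs p.2, by ring⟩
  · rintro ⟨g, hg⟩
    obtain ⟨v, hv⟩ := h2.exists_right_inv
    have hv' : (2 : R⟦X⟧) * C v = 1 := by rw [← map_ofNat C 2, ← map_mul, hv, map_one]
    refine ⟨(X * expand₂ (C v * shiftedEvenCoeffs B), X * expand₂ (C v * g)),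
      ⟨by simp, by simp⟩, ?_⟩
    rw [dFull_eq_expand hw, oddCoeffs_X_mul_expand, oddCoeffs_X_mul_expand]
    conv_rhs => rw [← expand_X_mul_shiftedEvenCoeffs hA hA0,
      ← expand_X_mul_shiftedEvenCoeffs hB hB0, hg]
    congr 2
    · linear_combination (X * d⁄dX R (evenCoeffs w) * g) * hv'
    · linear_combination (X * shiftedEvenCoeffs B) * hv'

noncomputable def cocyclesToQuotient (w : R⟦X⟧) :
    LinearMap.ker (dC R w) →ₗ[R] R⟦X⟧ ⧸ Ideal.span {d⁄dX R (evenCoeffs w)} :=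
  (Ideal.Quotient.mkₐ R _).toLinearMap ∘ₗ shiftedEvenCoeffs ∘ₗ LinearMap.fst R R⟦X⟧ R⟦X⟧ ∘ₗ
    (NormPairs R).subtype ∘ₗ (LinearMap.ker (dC R w)).subtype

theorem cocyclesToQuotient_surjective (w : R⟦X⟧) : Function.Surjective (cocyclesToQuotient w) := by
  intro q
  obtain ⟨g, rfl⟩ := Ideal.Quotient.mk_surjective q
  have hmem : (expand₂ (X * g), 0) ∈ NormPairs R := ⟨by simp, by simp⟩
  have hker : (⟨_, hmem⟩ : NormPairs R) ∈ LinearMap.ker (dC R w) := by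
    rw [LinearMap.mem_ker]
    ext : 1
    change dFull R w (expand₂ (X * g), 0) = 0
    rw [dFull_apply]
    simp only [map_zero, oddPartL_expand, mul_zero, Prod.mk_zero_zero]
  exact ⟨⟨_, hker⟩, congrArg _ (shiftedEvenCoeffs_expand_X_mul g)⟩

theorem ker_cocyclesToQuotient (hw : oddCoeffs w = 0) (hw' : d⁄dX R w ∈ R⟦X⟧⁰)
    (h2 : IsUnit (2 : R)) :
    LinearMap.ker (cocyclesToQuotient w) =
      (LinearMap.range (dC R w)).comap (LinearMap.ker (dC R w)).subtype := by
  ext ⟨⟨⟨A, B⟩, hAB⟩, hx⟩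
  obtain ⟨hA0, hB0⟩ : constantCoeff A = 0 ∧ constantCoeff B = 0 := hAB
  obtain ⟨hA, hB⟩ : oddCoeffs A = 0 ∧ oddCoeffs B = 0 :=
    (dFull_eq_zero_iff hw' h2).mp (congrArg Subtype.val hx)
  rw [LinearMap.mem_ker, Submodule.mem_comap, LinearMap.mem_range]
  change Ideal.Quotient.mk _ (shiftedEvenCoeffs A) = 0 ↔ _
  rw [Ideal.Quotient.eq_zero_iff_mem, Ideal.mem_span_singleton,
    ← exists_dFull_eq_iff hw h2 hA hA0 hB hB0]
  exact ⟨fun ⟨p, hp, h⟩ => ⟨⟨p, hp⟩, Subtype.ext h⟩,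
    fun ⟨⟨p, hp⟩, h⟩ => ⟨p, hp, congrArg Subtype.val h⟩⟩

end OddMoore

open OddMoore

/-- **Hochschild cohomology of odd Moore algebras** (Proposition 4.2).  For an odd Moore
algebra with structure `m₀ + w(t)∂_τ`, `w = ∑_{i≥k} w_i t^{2i}` with `w_k` not a zero
divisor, `2` invertible and `R` without `k`-torsion, the differential squares to zero and
the cohomology of the complex is `R[[t]]/(w̃')` where `w̃(t) := ∑_{i≥k} w_i t^i`. -/
theorem hochschild_cohomology_odd_moore (R : Type*) [CommRing R] (k : ℕ) (hk : 1 ≤ k)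
    (w : R⟦X⟧) (h2 : IsUnit (2 : R))
    (heven : ∀ n : ℕ, Odd n → coeff n w = 0)
    (hlow : ∀ i : ℕ, i < k → coeff (2 * i) w = 0)
    (hreg : ∀ r : R, coeff (2 * k) w * r = 0 → r = 0)
    (htor : ∀ r : R, (k : R) * r = 0 → r = 0) :
    (dC R w).comp (dC R w) = 0 ∧
    -- the homology `(ker d)/(im d)` is isomorphic, as an `R`-module, to `R⟦X⟧/(w̃')`:
    -- there is a surjective `R`-linear map from `ker d` onto `R⟦X⟧/(w̃')` whose kernel is
    -- exactly `im d` (viewed inside `ker d`).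
    ∃ φ : LinearMap.ker (dC R w) →ₗ[R]
        (R⟦X⟧ ⧸ Ideal.span {(PowerSeries.mk fun n => coeff (2 * n) w).derivativeFun}),
      Function.Surjective φ ∧
      LinearMap.ker φ = (LinearMap.range (dC R w)).comap (LinearMap.ker (dC R w)).subtype := by
  have hw : oddCoeffs w = 0 := by
    ext n
    simpa [oddCoeffs] using heven _ (odd_two_mul_add_one n)
  have hw' : d⁄dX R w ∈ R⟦X⟧⁰ := by
    refine derivative_mem_nonZeroDivisors (n := 2 * k) (by omega) (fun m _ hm => ?_) ?_
    · obtain ⟨i, rfl | rfl⟩ := Nat.even_or_odd' m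
      · exact hlow i (by omega)
      · exact heven _ (odd_two_mul_add_one i)
    · have hwk : coeff (2 * k) w ∈ R⁰ := mem_nonZeroDivisors_iff_left.mpr hreg
      have hkreg : (k : R) ∈ R⁰ := mem_nonZeroDivisors_iff_left.mpr htor
      push_cast
      exact mul_mem hwk (mul_mem h2.mem_nonZeroDivisors hkreg)
  exact ⟨dC_comp_dC hw, cocyclesToQuotient w, cocyclesToQuotient_surjective w,
    ker_cocyclesToQuotient hw hw' h2⟩
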